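/- arXiv:math/0410123 — 2 statements merged into one kernel-verified Lean document; each statement's English description precedes it below -/
import Mathlib

section
/- Let A = kQ/I be a triangular quadratic monomial algebra and define δ_{n-1} : A ⊗ kΓ_n ⊗ A → A ⊗ kΓ_{n-1} ⊗ A (tensor over E) by δ_{n-1}(1 ⊗ α_1⋯α_n ⊗ 1) = ᾱ_1 ⊗ α_2⋯α_n ⊗ 1 + (−1)^n 1 ⊗ α_1⋯α_{n-1} ⊗ ᾱ_n. Then δ_{n-1} ∘ δ_n = 0 for all n ≥ 1 (using that α_iα_{i+1} ∈ I, so products like ᾱ_1ᾱ_2 vanish in A). -/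
open scoped Classical TensorProduct BigOperators

noncomputable section

namespace StringAlgebras

variable {V Arr : Type}

/-- Consecutive arrows in the list are composable: the target of each arrow is
the source of the next one.  A nonempty such list is a (nontrivial) path of the
quiver with vertex set `V`, arrow set `Arr`, and source/target maps `src`, `tgt`. -/
def Composable (src tgt : Arr → V) (l : List Arr) : Prop :=
  l.Chain' fun a b => tgt a = src b

/-- A nontrivial path of the quiver. -/
def IsPath (src tgt : Arr → V) (l : List Arr) : Prop :=
  l ≠ [] ∧ Composable src tgt l

/-- The source vertex of a (nontrivial) path. -/
def srcOf (src : Arr → V) (l : List Arr) : Option V := l.head?.map src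

/-- The target vertex of a (nontrivial) path. -/
def tgtOf (tgt : Arr → V) (l : List Arr) : Option V := l.getLast?.map tgt

/-- The quiver is triangular: it has no oriented cycles, i.e. no nontrivial path
has equal source and target. -/
def Triangular (src tgt : Arr → V) : Prop :=
  ∀ l : List Arr, IsPath src tgt l → srcOf src l ≠ tgtOf tgt l

/-- Membership of a path in the quadratic monomial ideal `I` generated by the set
`R` of relations (composable pairs of arrows): some length-2 generator occurs as an
infix, i.e. the path can be written as `u · r · v` with `r ∈ R`. -/
def InI (R : Set (Arr × Arr)) (l : List Arr) : Prop :=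
  ∃ a b : Arr, (a, b) ∈ R ∧ [a, b] <:+: l

/-- `Γ_n`: paths `α₁ ⋯ αₙ` of length `n` with `αᵢαᵢ₊₁ ∈ I` for all `1 ≤ i < n`. -/
def Gamma (src tgt : Arr → V) (R : Set (Arr × Arr)) (n : ℕ) (l : List Arr) : Prop :=
  l.length = n ∧ Composable src tgt l ∧ ∀ p ∈ l.zip l.tail, p ∈ R

/-- Condition (S2): every vertex is the source of at most two arrows and the target
of at most two arrows. -/
def S2 (src tgt : Arr → V) : Prop :=
  ∀ v : V, Set.ncard {a : Arr | src a = v} ≤ 2 ∧ Set.ncard {a : Arr | tgt a = v} ≤ 2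

/-- Condition (S3): for every arrow `a` there is at most one arrow `b` with
`ab ∉ I` and at most one arrow `c` with `ca ∉ I`. -/
def S3 (src tgt : Arr → V) (R : Set (Arr × Arr)) : Prop :=
  (∀ a b b' : Arr, tgt a = src b → tgt a = src b' → (a, b) ∉ R → (a, b') ∉ R → b = b') ∧
  (∀ a c c' : Arr, tgt c = src a → tgt c' = src a → (c, a) ∉ R → (c', a) ∉ R → c = c')

/-- Condition (G1): for every arrow `a` there is at most one arrow `b` with
`ab ∈ I` and at most one arrow `c` with `ca ∈ I`. -/
def G1 (R : Set (Arr × Arr)) : Prop :=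
  (∀ a b b' : Arr, (a, b) ∈ R → (a, b') ∈ R → b = b') ∧
  (∀ a c c' : Arr, (c, a) ∈ R → (c', a) ∈ R → c = c')

section PresSection

variable (src tgt : Arr → V) (R : Set (Arr × Arr))
variable (k B : Type) [Field k] [Ring B] [Algebra k B] [Fintype V]

/-- A presentation of the `k`-algebra `B` as the quotient `A = kQ/I` of the path
algebra of the quiver `(V, Arr, src, tgt)` by the (quadratic) monomial ideal `I`
generated by `R`: `e` are the orthogonal vertex idempotents summing to `1`,
`arrB` are the classes of the arrows, products along relations or non-composable
pairs vanish, and the vertex idempotents together with the classes of nontrivial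
paths not in `I` form a `k`-basis of `B`. -/
structure Pres where
  e : V → B
  arrB : Arr → B
  idem : ∀ v, e v * e v = e v
  orth : ∀ v w, v ≠ w → e v * e w = 0
  sum_e : ∑ v : V, e v = 1
  src_mul : ∀ a, e (src a) * arrB a = arrB a
  mul_tgt : ∀ a, arrB a * e (tgt a) = arrB a
  rel_mul : ∀ a b, (a, b) ∈ R → arrB a * arrB b = 0
  noncomp_mul : ∀ a b, tgt a ≠ src b → arrB a * arrB b = 0
  bas : Module.Basis (V ⊕ {l : List Arr // IsPath src tgt l ∧ ¬InI R l}) k B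
  bas_inl : ∀ v, bas (Sum.inl v) = e v
  bas_inr : ∀ p, bas (Sum.inr p) = (p.1.map arrB).prod

end PresSection

section Defs

variable {src tgt : Arr → V} {R : Set (Arr × Arr)}
variable {k B : Type} [Field k] [Ring B] [Algebra k B] [Fintype V] [Fintype Arr]

/-- The class `p̄ ∈ B` of a path (the product of the classes of its arrows). -/
def Pres.pbar (P : Pres src tgt R k B) (l : List Arr) : B := (l.map P.arrB).prod

/-- The class of an optional arrow (`0` for `none`). -/
def Pres.arrO (P : Pres src tgt R k B) (o : Option Arr) : B := (o.map P.arrB).getD 0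

/-- The differential of the cochain complex `Hom_{E^e}(kΓ_•, A)` obtained from
Bardzell's minimal resolution: a degree-`(n-1)` cochain `h` (a function on paths,
supported on `Γ_{n-1}`) is sent to the cochain
`l = α₁⋯αₙ ↦ ᾱ₁ · h(α₂⋯αₙ) + (-1)ⁿ h(α₁⋯α_{n-1}) · ᾱₙ`. -/
def coDelta (P : Pres src tgt R k B) (φ : List Arr → B) : List Arr → B := fun l =>
  P.arrO l.head? * φ l.tail + (-1 : B) ^ l.length * (φ l.dropLast * P.arrO l.getLast?)

/-- Cup product of cochains on the minimal resolution:
`(f ∪ g)(α₁⋯αₙβ₁⋯β_m) = f(α₁⋯αₙ) · g(β₁⋯β_m)` where `n` is the degree of `f`. -/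
def cup (n : ℕ) (φ ψ : List Arr → B) : List Arr → B := fun l =>
  φ (l.take n) * ψ (l.drop n)

/-- The composition product `φ ∘ᵢ ψ` of cochains (of degrees `n` and `m`) on the
minimal resolution: the value `ψ(αᵢ⋯α_{i+m-1})` is expanded in the path basis of
`B` and each basis path is substituted into the argument of `φ`; a summand
survives only if the substituted sequence lies in `Γ_n`. -/
def circ (P : Pres src tgt R k B) (i n m : ℕ) (φ ψ : List Arr → B) : List Arr → B := fun l =>
  (P.bas.repr (ψ ((l.drop (i - 1)).take m))).sum fun j c =>
    Sum.elim (fun _ : V => (0 : B))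
      (fun q : {l' : List Arr // IsPath src tgt l' ∧ ¬InI R l'} =>
        if Gamma src tgt R n (l.take (i - 1) ++ q.1 ++ l.drop (i - 1 + m)) then
          c • φ (l.take (i - 1) ++ q.1 ++ l.drop (i - 1 + m))
        else 0) j

/-- The composition product `φ ∘ ψ = ∑ᵢ (-1)^{(i-1)(m-1)} φ ∘ᵢ ψ`. -/
def compProd (P : Pres src tgt R k B) (n m : ℕ) (φ ψ : List Arr → B) : List Arr → B := fun l =>
  ∑ i ∈ Finset.Icc 1 n, ((-1 : B) ^ ((i - 1) * (m - 1))) * circ P i n m φ ψ l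

/-- The Gerstenhaber bracket `[φ, ψ] = φ ∘ ψ - (-1)^{(n-1)(m-1)} ψ ∘ φ` at the
cochain level. -/
def bracket (P : Pres src tgt R k B) (n m : ℕ) (φ ψ : List Arr → B) : List Arr → B := fun l =>
  compProd P n m φ ψ l - ((-1 : B) ^ ((n - 1) * (m - 1))) * compProd P m n ψ φ l

/-- The `A-A`-bimodule action on coefficient pairs: `a ⊗ b ↦ (a * u) ⊗ (v * b)`.
A pair `a ⊗ b` records the outer tensor factors of an element `a ⊗ x ⊗ b`. -/
def act (u v : B) : B ⊗[k] B →ₗ[k] B ⊗[k] B :=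
  TensorProduct.map (LinearMap.mulRight k u) (LinearMap.mulLeft k v)

end Defs

/-- Index of the basis of `A ⊗_E (rad A)^{⊗n} ⊗_E A`: an `n`-tuple of nontrivial
paths not in `I`, consecutively composable. -/
def Tup (src tgt : Arr → V) (R : Set (Arr × Arr)) (n : ℕ) (t : List (List Arr)) : Prop :=
  t.length = n ∧ (∀ p ∈ t, IsPath src tgt p ∧ ¬InI R p) ∧ Composable src tgt t.flatten

/-- Model of the `A-A`-bimodule `A ⊗_E (rad A)^{⊗n} ⊗_E A`: the free bimodule on
tuples of paths, a basis tuple with coefficient `a ⊗ b` representing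
`a ⊗ r̄₁ ⊗ ⋯ ⊗ r̄ₙ ⊗ b`. -/
abbrev Nmod (src tgt : Arr → V) (R : Set (Arr × Arr)) (k B : Type) [Field k] [Ring B]
    [Algebra k B] (n : ℕ) : Type :=
  {t : List (List Arr) // Tup src tgt R n t} →₀ (B ⊗[k] B)

/-- Model of the `A-A`-bimodule `A ⊗_E kΓₙ ⊗_E A` of Bardzell's minimal
resolution: the free bimodule on `Γₙ`. -/
abbrev Mmod (src tgt : Arr → V) (R : Set (Arr × Arr)) (k B : Type) [Field k] [Ring B]
    [Algebra k B] (n : ℕ) : Type :=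
  {l : List Arr // Gamma src tgt R n l} →₀ (B ⊗[k] B)

section Maps

variable {src tgt : Arr → V} {R : Set (Arr × Arr)}
variable {k B : Type} [Field k] [Ring B] [Algebra k B] [Fintype V] [Fintype Arr]

theorem sTup_tup {n : ℕ} {l : List Arr} (h : Gamma src tgt R n l) :
    Tup src tgt R n (l.map fun a => [a]) := by
  refine ⟨by simpa using h.1, ?_, ?_⟩
  · intro p hp
    simp only [List.mem_map] at hp
    obtain ⟨a, -, rfl⟩ := hp
    refine ⟨⟨by simp, List.isChain_singleton a⟩, ?_⟩
    rintro ⟨x, y, -, hinf⟩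
    have := hinf.length_le
    simp at this
  · have hj : ∀ l' : List Arr, (l'.map fun a => [a]).flatten = l' := by
      intro l'
      induction l' with
      | nil => simp
      | cons a t ih => simp [ih]
    rw [hj]; exact h.2.1

/-- The comparison map `μₙ : A ⊗ kΓₙ ⊗ A → A ⊗ (rad A)^{⊗n} ⊗ A`,
`1 ⊗ α₁⋯αₙ ⊗ 1 ↦ 1 ⊗ ᾱ₁ ⊗ ⋯ ⊗ ᾱₙ ⊗ 1`. -/
def muMap (n : ℕ) (x : Mmod src tgt R k B n) : Nmod src tgt R k B n :=
  Finsupp.mapDomain (fun l => ⟨l.1.map fun a => [a], sTup_tup l.2⟩) x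

/-- The candidate element of `Γₙ` associated to a tuple `(p₁, …, pₙ)` of paths:
the last arrow of `p₁`, followed by the middle paths, followed by the first arrow
of `pₙ`. -/
def omegaIdx : List (List Arr) → List Arr
  | [] => []
  | [p] => p.getLast?.toList
  | p :: rest => p.getLast?.toList ++ rest.dropLast.flatten ++ (rest.getLast?.getD []).head?.toList

/-- The left residual `p̄'₁` of a tuple (for `p₁ = p'₁α₁`). -/
def omegaU (P : Pres src tgt R k B) : List (List Arr) → B
  | [] => 1
  | p :: _ => P.pbar p.dropLast

/-- The right residual `p̄'ₙ` of a tuple (for `pₙ = αₙp'ₙ`, `n ≥ 2`). -/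
def omegaV (P : Pres src tgt R k B) : List (List Arr) → B
  | [] => 1
  | [_] => 1
  | _ :: rest => P.pbar ((rest.getLast?.getD []).tail)

/-- The comparison map `ωₙ : A ⊗ (rad A)^{⊗n} ⊗ A → A ⊗ kΓₙ ⊗ A`, sending
`1 ⊗ p̄'₁ᾱ₁ ⊗ p̄₂ ⊗ ⋯ ⊗ ᾱₙp̄'ₙ ⊗ 1` to `p̄'₁ ⊗ α₁p₂⋯p_{n-1}αₙ ⊗ p̄'ₙ` if
`α₁p₂⋯p_{n-1}αₙ ∈ Γₙ` and to `0` otherwise. -/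
def omegaMap (P : Pres src tgt R k B) (n : ℕ) (x : Nmod src tgt R k B n) :
    Mmod src tgt R k B n :=
  x.sum fun t c =>
    if h : Gamma src tgt R n (omegaIdx t.1) then
      Finsupp.single ⟨omegaIdx t.1, h⟩ (act (k := k) (omegaU P t.1) (omegaV P t.1) c)
    else 0

/-- Merging of the `i`-th and `(i+1)`-st entries of a tuple (0-based),
corresponding to the product `r_j r_{j+1}` in the bar differential. -/
def mergeAt (t : List (List Arr)) (i : ℕ) : List (List Arr) :=
  t.take i ++ [(t[i]?.getD []) ++ (t[i + 1]?.getD [])] ++ t.drop (i + 2)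

/-- The differential `b` of the reduced bar-type resolution `K_rad`:
`b(1⊗r₁⊗⋯⊗r_{n+1}⊗1) = r₁⊗⋯⊗1 + ∑ⱼ (-1)ʲ 1⊗⋯⊗rⱼr_{j+1}⊗⋯⊗1 + (-1)^{n+1} 1⊗⋯⊗r_{n+1}`;
a merged tuple whose merged entry lies in `I` indexes the zero element and is
dropped. -/
def bmap (P : Pres src tgt R k B) (n : ℕ) (x : Nmod src tgt R k B (n + 1)) :
    Nmod src tgt R k B n :=
  x.sum fun t c =>
    (if h : Tup src tgt R n t.1.tail then
        Finsupp.single ⟨t.1.tail, h⟩ (act (k := k) (P.pbar (t.1.head?.getD [])) 1 c)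
      else 0)
    + (∑ i ∈ Finset.range n,
        if h : Tup src tgt R n (mergeAt t.1 i) then
          Finsupp.single ⟨mergeAt t.1 i, h⟩ (((-1 : k) ^ (i + 1)) • c)
        else 0)
    + (if h : Tup src tgt R n t.1.dropLast then
        Finsupp.single ⟨t.1.dropLast, h⟩
          (((-1 : k) ^ (n + 1)) • act (k := k) 1 (P.pbar (t.1.getLast?.getD [])) c)
      else 0)

/-- The differential `δ` of Bardzell's minimal resolution (quadratic monomial case):
`δ(1 ⊗ α₁⋯α_{n+1} ⊗ 1) = ᾱ₁ ⊗ α₂⋯α_{n+1} ⊗ 1 + (-1)^{n+1} 1 ⊗ α₁⋯αₙ ⊗ ᾱ_{n+1}`. -/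
def dmin (P : Pres src tgt R k B) (n : ℕ) (x : Mmod src tgt R k B (n + 1)) :
    Mmod src tgt R k B n :=
  x.sum fun l c =>
    (if h : Gamma src tgt R n l.1.tail then
        Finsupp.single ⟨l.1.tail, h⟩ (act (k := k) (P.arrO l.1.head?) 1 c)
      else 0)
    + (if h : Gamma src tgt R n l.1.dropLast then
        Finsupp.single ⟨l.1.dropLast, h⟩
          (((-1 : k) ^ (n + 1)) • act (k := k) 1 (P.arrO l.1.getLast?) c)
      else 0)

/-- The residue `p̄` of the type-(−) part of `x ∈ B` relative to a first arrow `a`: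
expand `x` in the path basis and sum `c_q • q̄.tail` over basis paths `q`
starting with the arrow `a` (so `q = a·p` contributes `c_q • p̄`). -/
def resMinus (P : Pres src tgt R k B) (x : B) (a : Arr) : B :=
  (P.bas.repr x).sum fun j c =>
    Sum.elim (fun _ : V => (0 : B))
      (fun q : {l' : List Arr // IsPath src tgt l' ∧ ¬InI R l'} =>
        if q.1.head? = some a then c • P.pbar q.1.tail else 0) j

/-- The type-(−) part of `x ∈ B` relative to a first arrow `a`: the sum of the
basis components of `x` on paths starting with the arrow `a`. -/
def fullMinus (P : Pres src tgt R k B) (x : B) (a : Arr) : B :=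
  (P.bas.repr x).sum fun j c =>
    Sum.elim (fun _ : V => (0 : B))
      (fun q : {l' : List Arr // IsPath src tgt l' ∧ ¬InI R l'} =>
        if q.1.head? = some a then c • P.pbar q.1 else 0) j

/-- The cochain `φ_≤` of Lemma 2.1/2.2: each type-(−) basis component
`(α₁⋯αₙ, ᾱ₁p̄)` of `φ` is replaced by its cohomologous shift
`(α₂⋯α_{n+1}, (-1)^{n+1} \overline{pα_{n+1}})`, the type-(0) and type-(+)
components being kept. -/
def phiLe (P : Pres src tgt R k B) (n : ℕ) (φ : List Arr → B) : List Arr → B := fun m =>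
  match m with
  | [] => φ []
  | a :: r =>
    (φ (a :: r) - fullMinus P (φ (a :: r)) a)
    + ∑ α : Arr,
        if Gamma src tgt R n (α :: (a :: r).dropLast) then
          ((-1 : B) ^ (n + 1)) * resMinus P (φ (α :: (a :: r).dropLast)) α
            * P.arrO ((a :: r).getLast?)
        else 0

end Maps


section Square

variable {src tgt : Arr → V} {R : Set (Arr × Arr)}
variable {k B : Type} [Field k] [Ring B] [Algebra k B] [Fintype V] [Fintype Arr]

lemma act_act (u v u' v' : B) (c : B ⊗[k] B) :
    act (k := k) u' v' (act (k := k) u v c) = act (k := k) (u * u') (v' * v) c := by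
  have h : (act (k := k) u' v').comp (act (k := k) u v) =
      act (k := k) (u * u') (v' * v) := by
    apply TensorProduct.ext'
    intro a b
    simp [act, mul_assoc]
  exact LinearMap.congr_fun h c

lemma act_zero_left (v : B) (c : B ⊗[k] B) : act (k := k) (0 : B) v c = 0 := by
  have h : act (k := k) (0 : B) v = 0 := by
    apply TensorProduct.ext'
    intro a b
    simp [act]
  simp [h]

lemma act_zero_right (u : B) (c : B ⊗[k] B) : act (k := k) u (0 : B) c = 0 := by
  have h : act (k := k) u (0 : B) = 0 := by
    apply TensorProduct.ext'
    intro a b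
    simp [act]
  simp [h]

lemma dmin_zero (P : Pres src tgt R k B) (n : ℕ) :
    dmin P n (0 : Mmod src tgt R k B (n + 1)) = 0 := by
  simp [dmin]

lemma dmin_add (P : Pres src tgt R k B) (n : ℕ) (x y : Mmod src tgt R k B (n + 1)) :
    dmin P n (x + y) = dmin P n x + dmin P n y := by
  unfold dmin
  rw [Finsupp.sum_add_index']
  · intro l
    split_ifs <;> simp
  · intro l c1 c2
    split_ifs <;> simp [smul_add, Finsupp.single_add] <;> abel

lemma dmin_single (P : Pres src tgt R k B) (n : ℕ)
    (L : {l : List Arr // Gamma src tgt R (n + 1) l}) (c : B ⊗[k] B) :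
    dmin P n (Finsupp.single L c) =
      (if h : Gamma src tgt R n L.1.tail then
          Finsupp.single ⟨L.1.tail, h⟩ (act (k := k) (P.arrO L.1.head?) 1 c)
        else 0)
      + (if h : Gamma src tgt R n L.1.dropLast then
          Finsupp.single ⟨L.1.dropLast, h⟩
            (((-1 : k) ^ (n + 1)) • act (k := k) 1 (P.arrO L.1.getLast?) c)
        else 0) := by
  unfold dmin
  apply Finsupp.sum_single_index
  split_ifs <;> simp

lemma zip_forall {m : List Arr}
    (h : ∀ i (_ : i + 1 < m.length), (m[i], m[i+1]) ∈ R) :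
    ∀ p ∈ m.zip m.tail, p ∈ R := by
  intro p hp
  rw [List.mem_iff_getElem] at hp
  obtain ⟨i, hi, rfl⟩ := hp
  have hi' : i + 1 < m.length := by
    simp only [List.length_zip, List.length_tail] at hi
    omega
  simpa using h i hi'

lemma pair_mem {l : List Arr} {i : ℕ} (h : i + 1 < l.length)
    (hz : ∀ p ∈ l.zip l.tail, p ∈ R) : (l[i], l[i+1]) ∈ R := by
  have hzlen : i < (l.zip l.tail).length := by
    simp only [List.length_zip, List.length_tail]
    omega
  have hmem := List.getElem_mem hzlen
  rw [List.getElem_zip] at hmem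
  simpa using hz _ hmem

lemma key (P : Pres src tgt R k B) (n : ℕ) (l : List Arr)
    (hl : Gamma src tgt R (n + 2) l) (c : B ⊗[k] B) :
    dmin P n (dmin P (n + 1) (Finsupp.single ⟨l, hl⟩ c)) = 0 := by
  have hlen : l.length = n + 2 := hl.1
  have hcomp : Composable src tgt l := hl.2.1
  have hzip := hl.2.2
  have hpair : ∀ i (_ : i + 1 < l.length), (l[i], l[i+1]) ∈ R :=
    fun i hi => pair_mem hi hzip
  -- Gamma for tail and dropLast
  have h1 : Gamma src tgt R (n + 1) l.tail := by
    refine ⟨by simp [hlen], hcomp.tail, zip_forall ?_⟩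
    intro i hi
    simp only [List.length_tail] at hi
    simp only [List.getElem_tail]
    exact hpair (i + 1) (by omega)
  have h2 : Gamma src tgt R (n + 1) l.dropLast := by
    refine ⟨by simp [hlen], hcomp.prefix l.dropLast_prefix, zip_forall ?_⟩
    intro i hi
    simp only [List.length_dropLast] at hi
    simp only [List.getElem_dropLast]
    exact hpair i (by omega)
  have h0 : 0 < l.length := by omega
  have h1l : 1 < l.length := by omega
  have e_head : l.head? = some (l[0]'h0) := by
    rw [List.head?_eq_getElem?, List.getElem?_eq_getElem h0]
  have e_tail_head : l.tail.head? = some (l[1]'h1l) := by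
    rw [List.head?_eq_getElem?,
      List.getElem?_eq_getElem (by simp [List.length_tail]; omega : 0 < l.tail.length)]
    simp
  have e_last : l.getLast? = some (l[n+1]'(by omega)) := by
    have hidx : l.length - 1 = n + 1 := by omega
    rw [List.getLast?_eq_getElem?, hidx, List.getElem?_eq_getElem (by omega)]
  have e_tail_last : l.tail.getLast? = some (l[n+1]'(by omega)) := by
    have hidx : l.tail.length - 1 = n := by simp [List.length_tail, hlen]
    rw [List.getLast?_eq_getElem?, hidx,
      List.getElem?_eq_getElem (by simp [List.length_tail]; omega)]
    simp
  have e_dl_head : l.dropLast.head? = some (l[0]'h0) := by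
    rw [List.head?_eq_getElem?,
      List.getElem?_eq_getElem (by simp [List.length_dropLast]; omega : 0 < l.dropLast.length)]
    simp [List.getElem_dropLast]
  have e_dl_last : l.dropLast.getLast? = some (l[n]'(by omega)) := by
    have hidx : l.dropLast.length - 1 = n := by simp [List.length_dropLast, hlen]
    rw [List.getLast?_eq_getElem?, hidx,
      List.getElem?_eq_getElem (by simp [List.length_dropLast]; omega)]
    simp
  have e_tdl : l.tail.dropLast = l.dropLast.tail := by
    apply List.ext_getElem
    · simp [List.length_dropLast, List.length_tail]
    · intro i hi hi'
      simp [List.getElem_dropLast, List.getElem_tail]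
  have hrel1 : P.arrB (l[0]'h0) * P.arrB (l[1]'h1l) = 0 :=
    P.rel_mul _ _ (hpair 0 h1l)
  have hrel2 : P.arrB (l[n]'(by omega)) * P.arrB (l[n+1]'(by omega)) = 0 :=
    P.rel_mul _ _ (hpair n (by omega))
  rw [dmin_single, dif_pos h1, dif_pos h2, dmin_add, dmin_single, dmin_single]
  simp only [e_tdl]
  -- corner terms vanish
  have corner1 :
      (if h : Gamma src tgt R n l.tail.tail then
          Finsupp.single (⟨l.tail.tail, h⟩ : {m : List Arr // Gamma src tgt R n m})
            (act (k := k) (P.arrO l.tail.head?) 1 (act (k := k) (P.arrO l.head?) 1 c))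
        else 0) = 0 := by
    rw [e_tail_head, e_head]
    simp only [Pres.arrO, Option.map_some, Option.getD_some]
    rw [act_act, one_mul, hrel1]
    split_ifs with h
    · rw [act_zero_left, Finsupp.single_zero]
    · rfl
  have corner2 :
      (if h : Gamma src tgt R n l.dropLast.dropLast then
          Finsupp.single (⟨l.dropLast.dropLast, h⟩ : {m : List Arr // Gamma src tgt R n m})
            (((-1 : k) ^ (n + 1)) • act (k := k) 1 (P.arrO l.dropLast.getLast?)
              (((-1 : k) ^ (n + 1 + 1)) • act (k := k) 1 (P.arrO l.getLast?) c))
        else 0) = 0 := by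
    rw [e_dl_last, e_last]
    simp only [Pres.arrO, Option.map_some, Option.getD_some]
    rw [map_smul, act_act, one_mul, hrel2]
    split_ifs with h
    · rw [act_zero_right, smul_zero, smul_zero, Finsupp.single_zero]
    · rfl
  rw [corner1, corner2]
  rw [e_dl_head, e_head, e_tail_last, e_last]
  simp only [Pres.arrO, Option.map_some, Option.getD_some]
  by_cases hmid : Gamma src tgt R n l.dropLast.tail
  · rw [dif_pos hmid, dif_pos hmid, zero_add, add_zero, ← Finsupp.single_add]
    rw [map_smul, act_act, act_act, one_mul, one_mul, mul_one, mul_one]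
    rw [← add_smul]
    have hsum : (-1 : k) ^ (n + 1) + (-1 : k) ^ (n + 1 + 1) = 0 := by
      rw [pow_succ ((-1 : k)) (n + 1)]
      ring
    rw [hsum, zero_smul, Finsupp.single_zero]
  · rw [dif_neg hmid, dif_neg hmid]
    simp

end Square

/-- The differential `δ` of Bardzell's minimal resolution (quadratic
monomial case) squares to zero: `δ_{n-1} ∘ δ_n = 0` for all `n ≥ 1` (using that the
products `ᾱᵢᾱᵢ₊₁` vanish in `A`). -/
theorem stmt17 {V Arr : Type} [Fintype V] [Fintype Arr]
    (src tgt : Arr → V) (R : Set (Arr × Arr))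
    (hR : ∀ p ∈ R, tgt p.1 = src p.2)
    (htri : Triangular src tgt)
    (k B : Type) [Field k] [Ring B] [Algebra k B]
    (P : Pres src tgt R k B)
    (n : ℕ) (x : Mmod src tgt R k B (n + 2)) :
    dmin P n (dmin P (n + 1) x) = 0 := by
  induction x using Finsupp.induction with
  | zero => rw [dmin_zero, dmin_zero]
  | single_add L c f _ _ ih =>
    rw [dmin_add, dmin_add, ih, add_zero]
    obtain ⟨l, hl⟩ := L
    exact key P n l hl c

end StringAlgebras

end
end

section
/- Let (Q, I) be a string bound quiver with I quadratic and Q without oriented cycles, and let φ ∈ Ker δ^n ⊆ Hom_{E^e}(kΓ_n, A). Write φ(α_1⋯α_n) with respect to the decomposition of cochains into types (−, 0, +), and let φ_≤ be as in Lemma 2.1 (replacing each type-(−) basis component f by f_+). If α_1⋯α_{n+1} ∈ Γ_{n+1}, then φ_≤(α_1⋯α_n) · ᾱ_{n+1} = 0 in A. -/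
open scoped Classical TensorProduct BigOperators

noncomputable section

namespace StringAlgebras

variable {V Arr : Type}

section Aux

variable {src tgt : Arr → V} {R : Set (Arr × Arr)}
variable {k B : Type} [Field k] [Ring B] [Algebra k B] [Fintype V] [Fintype Arr]

/-- Index type of the basis of `B`. -/
abbrev Idx (src tgt : Arr → V) (R : Set (Arr × Arr)) : Type :=
  V ⊕ {l' : List Arr // IsPath src tgt l' ∧ ¬InI R l'}

/-- Basis indices that are nontrivial paths starting with the arrow `a`. -/
def Sa (src tgt : Arr → V) (R : Set (Arr × Arr)) (a : Arr) : Set (Idx src tgt R) :=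
  {j | Sum.elim (fun _ : V => False) (fun q => q.1.head? = some a) j}

/-- Elements of `B` supported (in the path basis) on a set `T` of indices. -/
def suppSub (P : Pres src tgt R k B) (T : Set (Idx src tgt R)) : Submodule k B where
  carrier := {x | ∀ j ∈ (P.bas.repr x).support, j ∈ T}
  zero_mem' := by simp
  add_mem' := by
    intro x y hx hy j hj
    rw [map_add] at hj
    rcases Finset.mem_union.mp (Finsupp.support_add hj) with h | h
    exacts [hx j h, hy j h]
  smul_mem' := by
    intro c x hx j hj
    rw [map_smul] at hj
    exact hx j (Finsupp.support_smul hj)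

theorem bas_mem_suppSub (P : Pres src tgt R k B) {T : Set (Idx src tgt R)}
    {j : Idx src tgt R} (hj : j ∈ T) : P.bas j ∈ suppSub P T := by
  intro i hi
  rw [P.bas.repr_self] at hi
  have := Finsupp.support_single_subset hi
  simp only [Finset.mem_singleton] at this
  exact this ▸ hj

theorem suppSub_eq_zero (P : Pres src tgt R k B) {T : Set (Idx src tgt R)} {x : B}
    (h1 : x ∈ suppSub P T) (h2 : x ∈ suppSub P Tᶜ) : x = 0 := by
  have hs : (P.bas.repr x).support = ∅ := by
    ext j
    simp only [Finset.notMem_empty, iff_false]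
    intro hj
    exact h2 j hj (h1 j hj)
  have : P.bas.repr x = 0 := Finsupp.support_eq_empty.mp hs
  simpa using P.bas.repr.map_eq_zero_iff.mp this

theorem neg_one_pow_mul_mem (P : Pres src tgt R k B) {T : Set (Idx src tgt R)} {x : B}
    (hx : x ∈ suppSub P T) (i : ℕ) : (-1 : B) ^ i * x ∈ suppSub P T := by
  rcases Nat.even_or_odd i with h | h
  · rw [h.neg_one_pow, one_mul]; exact hx
  · rw [h.neg_one_pow, neg_one_mul]; exact neg_mem hx

theorem arrO_some (P : Pres src tgt R k B) (a : Arr) : P.arrO (some a) = P.arrB a := rfl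

theorem pbar_cons (P : Pres src tgt R k B) (a : Arr) (t : List Arr) :
    P.pbar (a :: t) = P.arrB a * P.pbar t := by simp [Pres.pbar]

theorem pbar_append (P : Pres src tgt R k B) (u v : List Arr) :
    P.pbar (u ++ v) = P.pbar u * P.pbar v := by simp [Pres.pbar]

theorem pbar_singleton (P : Pres src tgt R k B) (a : Arr) : P.pbar [a] = P.arrB a := by
  simp [Pres.pbar]

theorem infix_concat {x y α : Arr} {s : List Arr} (h : [x, y] <:+: s ++ [α]) :
    [x, y] <:+: s ∨ (y = α ∧ s.getLast? = some x) := by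
  obtain ⟨u, v, huv⟩ := h
  rcases v.eq_nil_or_concat with rfl | ⟨v', z, rfl⟩
  · right
    rw [List.append_nil] at huv
    have h2 : (u ++ [x]) ++ [y] = s ++ [α] := by
      rw [← huv]; simp
    obtain ⟨h3, h4⟩ := List.append_inj' h2 rfl
    have hy : y = α := by simpa using h4
    refine ⟨hy, ?_⟩
    rw [← h3, List.getLast?_concat]
  · left
    rw [List.concat_eq_append] at huv
    have h2 : (u ++ [x, y] ++ v') ++ [z] = s ++ [α] := by
      rw [← huv]; simp
    obtain ⟨h3, h4⟩ := List.append_inj' h2 rfl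
    exact ⟨u, v', h3⟩

theorem infix_cons {x y a : Arr} {s : List Arr} (h : [x, y] <:+: a :: s) :
    [x, y] <:+: s ∨ (x = a ∧ s.head? = some y) := by
  obtain ⟨u, v, huv⟩ := h
  cases u with
  | nil =>
    right
    simp only [List.nil_append, List.cons_append] at huv
    obtain ⟨rfl, h2⟩ : x = a ∧ y :: v = s :=
      ⟨(List.cons.injEq _ _ _ _ ▸ huv).1, by
        have := (List.cons.injEq _ _ _ _ ▸ huv).2; simpa using this⟩
    exact ⟨rfl, by rw [← h2]; rfl⟩
  | cons b u' =>
    left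
    simp only [List.cons_append] at huv
    exact ⟨u', v, (List.cons.injEq _ _ _ _ ▸ huv).2⟩

theorem singleton_basis (P : Pres src tgt R k B) (a : Arr) :
    ∃ h : IsPath src tgt [a] ∧ ¬InI R [a],
      P.arrB a = P.bas (Sum.inr ⟨[a], h⟩) := by
  refine ⟨⟨⟨List.cons_ne_nil a [], List.isChain_singleton a⟩, ?_⟩, ?_⟩
  · rintro ⟨x, y, -, hinf⟩
    have := hinf.length_le
    simp at this
  · rw [P.bas_inr]
    simp

theorem pbar_mul_arr (P : Pres src tgt R k B)
    (q : {l' : List Arr // IsPath src tgt l' ∧ ¬InI R l'}) (α : Arr) :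
    P.pbar q.1 * P.arrB α = 0 ∨
      ∃ h : IsPath src tgt (q.1 ++ [α]) ∧ ¬InI R (q.1 ++ [α]),
        P.pbar q.1 * P.arrB α = P.bas (Sum.inr ⟨q.1 ++ [α], h⟩) := by
  obtain ⟨⟨hne, hch⟩, hni⟩ := q.2
  have hlast : q.1 = q.1.dropLast ++ [q.1.getLast hne] := (List.dropLast_append_getLast hne).symm
  by_cases hcomp : tgt (q.1.getLast hne) = src α
  · by_cases hrel : (q.1.getLast hne, α) ∈ R
    · left
      conv_lhs => rw [hlast]
      rw [pbar_append, pbar_singleton, mul_assoc, P.rel_mul _ _ hrel, mul_zero]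
    · right
      have hpath : IsPath src tgt (q.1 ++ [α]) := by
        refine ⟨by simp, ?_⟩
        rw [Composable, List.Chain', List.isChain_append]
        refine ⟨hch, List.isChain_singleton α, ?_⟩
        intro x hx y hy
        simp only [List.head?_cons, Option.mem_def, Option.some.injEq] at hy
        rw [List.getLast?_eq_getLast hne, Option.mem_def, Option.some.injEq] at hx
        subst hx; subst hy
        exact hcomp
      have hnI : ¬InI R (q.1 ++ [α]) := by
        rintro ⟨x, y, hxy, hinf⟩
        rcases infix_concat hinf with h' | ⟨rfl, hlx⟩
        · exact hni ⟨x, y, hxy, h'⟩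
        · rw [List.getLast?_eq_getLast hne, Option.some.injEq] at hlx
          exact hrel (hlx ▸ hxy)
      refine ⟨⟨hpath, hnI⟩, ?_⟩
      rw [P.bas_inr]
      show P.pbar q.1 * P.arrB α = P.pbar (q.1 ++ [α])
      rw [pbar_append, pbar_singleton]
  · left
    conv_lhs => rw [hlast]
    rw [pbar_append, pbar_singleton, mul_assoc, P.noncomp_mul _ _ hcomp, mul_zero]

theorem pbar_mul_mem_S (P : Pres src tgt R k B) {a : Arr}
    {q : {l' : List Arr // IsPath src tgt l' ∧ ¬InI R l'}} (α : Arr)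
    (hq : q.1.head? = some a) :
    P.pbar q.1 * P.arrB α ∈ suppSub P (Sa src tgt R a) := by
  rcases pbar_mul_arr P q α with h | ⟨h, heq⟩
  · rw [h]; exact zero_mem _
  · rw [heq]
    apply bas_mem_suppSub
    show (q.1 ++ [α]).head? = some a
    obtain ⟨b, t, hb⟩ := List.exists_cons_of_ne_nil q.2.1.1
    rw [hb] at hq ⊢
    simpa using hq

theorem pbar_mul_mem_notS (P : Pres src tgt R k B) {a : Arr}
    {q : {l' : List Arr // IsPath src tgt l' ∧ ¬InI R l'}} (α : Arr)
    (hq : q.1.head? ≠ some a) :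
    P.pbar q.1 * P.arrB α ∈ suppSub P (Sa src tgt R a)ᶜ := by
  rcases pbar_mul_arr P q α with h | ⟨h, heq⟩
  · rw [h]; exact zero_mem _
  · rw [heq]
    apply bas_mem_suppSub
    show ¬((q.1 ++ [α]).head? = some a)
    obtain ⟨b, t, hb⟩ := List.exists_cons_of_ne_nil q.2.1.1
    rw [hb] at hq ⊢
    simpa using hq

theorem e_mul_arr_mem (P : Pres src tgt R k B) (v : V) {a α : Arr} (hα : α ≠ a) :
    P.e v * P.arrB α ∈ suppSub P (Sa src tgt R a)ᶜ := by
  by_cases hv : v = src α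
  · subst hv
    rw [P.src_mul]
    obtain ⟨h, heq⟩ := singleton_basis P α
    rw [heq]
    apply bas_mem_suppSub
    show ¬(([α] : List Arr).head? = some a)
    simpa using hα
  · have : P.e v * P.arrB α = 0 := by
      rw [← P.src_mul α, ← mul_assoc, P.orth _ _ hv, zero_mul]
    rw [this]; exact zero_mem _

theorem arr_mul_bas_mem (P : Pres src tgt R k B) (a : Arr) (j : Idx src tgt R) :
    P.arrB a * P.bas j ∈ suppSub P (Sa src tgt R a) := by
  cases j with
  | inl v =>
    rw [P.bas_inl]
    by_cases hv : v = tgt a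
    · subst hv
      rw [P.mul_tgt]
      obtain ⟨h, heq⟩ := singleton_basis P a
      rw [heq]
      exact bas_mem_suppSub P rfl
    · have : P.arrB a * P.e v = 0 := by
        rw [← P.mul_tgt a, mul_assoc, P.orth _ _ (fun h => hv h.symm), mul_zero]
      rw [this]; exact zero_mem _
  | inr q =>
    rw [P.bas_inr]
    show P.arrB a * P.pbar q.1 ∈ _
    obtain ⟨⟨hne, hch⟩, hni⟩ := q.2
    obtain ⟨b, t, hb⟩ := List.exists_cons_of_ne_nil hne
    by_cases hcomp : tgt a = src b
    · by_cases hrel : (a, b) ∈ R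
      · have : P.arrB a * P.pbar q.1 = 0 := by
          rw [hb, pbar_cons, ← mul_assoc, P.rel_mul _ _ hrel, zero_mul]
        rw [this]; exact zero_mem _
      · have hpath : IsPath src tgt (a :: q.1) := by
          refine ⟨List.cons_ne_nil _ _, ?_⟩
          rw [Composable, List.Chain', List.isChain_cons]
          refine ⟨?_, hch⟩
          intro y hy
          rw [hb, List.head?_cons, Option.mem_def, Option.some.injEq] at hy
          subst hy; exact hcomp
        have hnI : ¬InI R (a :: q.1) := by
          rintro ⟨x, y, hxy, hinf⟩
          rcases infix_cons hinf with h' | ⟨rfl, hhy⟩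
          · exact hni ⟨x, y, hxy, h'⟩
          · rw [hb, List.head?_cons, Option.some.injEq] at hhy
            exact hrel (hhy ▸ hxy)
        have heq : P.arrB a * P.pbar q.1 = P.bas (Sum.inr ⟨a :: q.1, hpath, hnI⟩) := by
          rw [P.bas_inr]
          show _ = P.pbar (a :: q.1)
          rw [pbar_cons]
        rw [heq]
        exact bas_mem_suppSub P rfl
    · have : P.arrB a * P.pbar q.1 = 0 := by
        rw [hb, pbar_cons, ← mul_assoc, P.noncomp_mul _ _ hcomp, zero_mul]
      rw [this]; exact zero_mem _

theorem arr_mul_mem (P : Pres src tgt R k B) (a : Arr) (x : B) :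
    P.arrB a * x ∈ suppSub P (Sa src tgt R a) := by
  have hx := P.bas.linearCombination_repr x
  rw [Finsupp.linearCombination_apply, Finsupp.sum] at hx
  rw [← hx, Finset.mul_sum]
  apply Submodule.sum_mem
  intro j _
  rw [mul_smul_comm]
  exact Submodule.smul_mem _ _ (arr_mul_bas_mem P a j)

theorem last_pair_mem : ∀ (l : List Arr) {x y : Arr},
    l.dropLast.getLast? = some x → l.getLast? = some y → (x, y) ∈ l.zip l.tail
  | [], x, y, hx, _ => by simp at hx
  | [a], x, y, hx, _ => by simp at hx
  | [a, b], x, y, hx, hy => by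
    simp only [List.dropLast_cons₂, List.dropLast_singleton, List.getLast?_singleton,
      Option.some.injEq] at hx
    simp only [List.getLast?_cons_cons, List.getLast?_singleton, Option.some.injEq] at hy
    subst hx; subst hy
    simp [List.zip]
  | a :: b :: c :: t, x, y, hx, hy => by
    have h1 : (b :: c :: t).dropLast.getLast? = some x := by
      rw [List.dropLast_cons₂] at hx ⊢
      rw [List.dropLast_cons₂, List.getLast?_cons_cons] at hx
      exact hx
    have h2 : (b :: c :: t).getLast? = some y := by
      rw [List.getLast?_cons_cons] at hy; exact hy
    have ih := last_pair_mem (b :: c :: t) h1 h2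
    show (x, y) ∈ (a, b) :: ((b :: c :: t).zip (c :: t))
    exact List.mem_cons_of_mem _ ih

end Aux


/-- **Lemma 2.3 a.** For a triangular quadratic string algebra: if `φ`
is a cocycle of degree `n` and `α₁⋯α_{n+1} ∈ Γ_{n+1}`, then
`φ_≤(α₁⋯αₙ) · ᾱ_{n+1} = 0` in `A`. -/
theorem stmt18 {V Arr : Type} [Fintype V] [Fintype Arr]
    (src tgt : Arr → V) (R : Set (Arr × Arr))
    (hR : ∀ p ∈ R, tgt p.1 = src p.2)
    (htri : Triangular src tgt) (hS2 : S2 src tgt) (hS3 : S3 src tgt R)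
    (k B : Type) [Field k] [Ring B] [Algebra k B]
    (P : Pres src tgt R k B)
    (n : ℕ) (hn : 1 ≤ n)
    (φ : List Arr → B)
    (hφsupp : ∀ l : List Arr, ¬Gamma src tgt R n l → φ l = 0)
    (hφcor : ∀ (a : Arr) (r : List Arr),
      φ (a :: r) = P.e (src a) * φ (a :: r) * P.e (tgt ((a :: r).getLast (List.cons_ne_nil a r))))
    (hφcoc : ∀ l : List Arr, Gamma src tgt R (n + 1) l → coDelta P φ l = 0)
    (l : List Arr) (hl : Gamma src tgt R (n + 1) l) :
    phiLe P n φ l.dropLast * P.arrO l.getLast? = 0 := by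
  classical
  obtain ⟨hlen, hch, hrelz⟩ := hl
  have hlne : l ≠ [] := by intro h; rw [h] at hlen; simp at hlen
  obtain ⟨a1, rest, rfl⟩ := List.exists_cons_of_ne_nil hlne
  have hrestne : rest ≠ [] := by
    intro h; subst h; simp at hlen; omega
  have hmdrop : (a1 :: rest).dropLast = a1 :: rest.dropLast :=
    List.dropLast_cons_of_ne_nil hrestne
  have hmne : (a1 :: rest.dropLast) ≠ [] := List.cons_ne_nil _ _
  set αl := (a1 :: rest).getLast (List.cons_ne_nil _ _) with hαl
  have hllast : (a1 :: rest).getLast? = some αl := List.getLast?_eq_getLast _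
  set αp := (a1 :: rest.dropLast).getLast hmne with hαp
  have hmlast : (a1 :: rest.dropLast).getLast? = some αp := List.getLast?_eq_getLast _
  have hpairzip : (αp, αl) ∈ (a1 :: rest).zip rest := by
    have := last_pair_mem (a1 :: rest) (x := αp) (y := αl)
      (by rw [hmdrop]; exact hmlast) hllast
    simpa using this
  have hpairR : (αp, αl) ∈ R := hrelz _ hpairzip
  have hcompPrev : tgt αp = src αl := hR _ hpairR
  have ha1ne : αl ≠ a1 := by
    intro h
    have hchm : Composable src tgt (a1 :: rest.dropLast) :=
      List.IsChain.prefix hch (hmdrop ▸ List.dropLast_prefix _)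
    refine htri (a1 :: rest.dropLast) ⟨hmne, hchm⟩ ?_
    show ((a1 :: rest.dropLast).head?).map src = ((a1 :: rest.dropLast).getLast?).map tgt
    rw [hmlast, List.head?_cons]
    show some (src a1) = some (tgt αp)
    rw [hcompPrev, ← h]
  -- the cocycle condition on l
  have hcoc := hφcoc (a1 :: rest) ⟨hlen, hch, hrelz⟩
  simp only [coDelta, List.tail_cons, List.head?_cons] at hcoc
  rw [hlen, hllast, hmdrop] at hcoc
  rw [arrO_some, arrO_some] at hcoc
  -- hcoc : arrB a1 * φ rest + (-1)^(n+1) * (φ (a1 :: rest.dropLast) * arrB αl) = 0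
  have hsq : (-1 : B) ^ (n + 1) * (-1 : B) ^ (n + 1) = 1 := by
    rw [← pow_add]
    exact Even.neg_one_pow ⟨n + 1, by ring⟩
  have h1 : (-1 : B) ^ (n + 1) * (φ (a1 :: rest.dropLast) * P.arrB αl)
      = -(P.arrB a1 * φ rest) := eq_neg_of_add_eq_zero_right hcoc
  have hphim : φ (a1 :: rest.dropLast) * P.arrB αl
      = (-1 : B) ^ (n + 1) * (-(P.arrB a1 * φ rest)) := by
    calc φ (a1 :: rest.dropLast) * P.arrB αl
        = 1 * (φ (a1 :: rest.dropLast) * P.arrB αl) := (one_mul _).symm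
      _ = ((-1 : B) ^ (n + 1) * (-1 : B) ^ (n + 1))
            * (φ (a1 :: rest.dropLast) * P.arrB αl) := by rw [hsq]
      _ = (-1 : B) ^ (n + 1)
            * ((-1 : B) ^ (n + 1) * (φ (a1 :: rest.dropLast) * P.arrB αl)) := by
          rw [mul_assoc]
      _ = (-1 : B) ^ (n + 1) * (-(P.arrB a1 * φ rest)) := by rw [h1]
  have hMφ : φ (a1 :: rest.dropLast) * P.arrB αl ∈ suppSub P (Sa src tgt R a1) := by
    rw [hphim]
    exact neg_one_pow_mul_mem P (neg_mem (arr_mul_mem P a1 (φ rest))) (n + 1)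
  have hMfm : fullMinus P (φ (a1 :: rest.dropLast)) a1 * P.arrB αl
      ∈ suppSub P (Sa src tgt R a1) := by
    rw [fullMinus, Finsupp.sum, Finset.sum_mul]
    apply Submodule.sum_mem
    intro j _
    cases j with
    | inl v => rw [Sum.elim_inl, zero_mul]; exact zero_mem _
    | inr q =>
      rw [Sum.elim_inr]
      by_cases hq : q.1.head? = some a1
      · rw [if_pos hq, smul_mul_assoc]
        exact Submodule.smul_mem _ _ (pbar_mul_mem_S P αl hq)
      · rw [if_neg hq, zero_mul]; exact zero_mem _
  have hdiff : φ (a1 :: rest.dropLast) - fullMinus P (φ (a1 :: rest.dropLast)) a1 =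
      (P.bas.repr (φ (a1 :: rest.dropLast))).sum (fun j c => c • P.bas j -
        Sum.elim (fun _ : V => (0 : B))
          (fun q : {l' : List Arr // IsPath src tgt l' ∧ ¬InI R l'} =>
            if q.1.head? = some a1 then c • P.pbar q.1 else 0) j) := by
    rw [Finsupp.sum_sub]
    congr 1
    conv_lhs => rw [← P.bas.linearCombination_repr (φ (a1 :: rest.dropLast))]
    rw [Finsupp.linearCombination_apply]
  have hN : (φ (a1 :: rest.dropLast) - fullMinus P (φ (a1 :: rest.dropLast)) a1)
      * P.arrB αl ∈ suppSub P (Sa src tgt R a1)ᶜ := by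
    rw [hdiff, Finsupp.sum, Finset.sum_mul]
    apply Submodule.sum_mem
    intro j _
    cases j with
    | inl v =>
      rw [Sum.elim_inl, sub_zero, P.bas_inl, smul_mul_assoc]
      exact Submodule.smul_mem _ _ (e_mul_arr_mem P v ha1ne)
    | inr q =>
      rw [Sum.elim_inr]
      have hbq : P.bas (Sum.inr q) = P.pbar q.1 := by rw [P.bas_inr]; rfl
      by_cases hq : q.1.head? = some a1
      · rw [if_pos hq, hbq, sub_self, zero_mul]
        exact zero_mem _
      · rw [if_neg hq, sub_zero, hbq, smul_mul_assoc]
        exact Submodule.smul_mem _ _ (pbar_mul_mem_notS P αl hq)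
  have hzero : (φ (a1 :: rest.dropLast) - fullMinus P (φ (a1 :: rest.dropLast)) a1)
      * P.arrB αl = 0 := by
    apply suppSub_eq_zero P ?_ hN
    rw [sub_mul]
    exact sub_mem hMφ hMfm
  -- final assembly
  rw [hmdrop, hllast, arrO_some]
  show phiLe P n φ (a1 :: rest.dropLast) * P.arrB αl = 0
  rw [phiLe, add_mul, hzero, zero_add, Finset.sum_mul]
  apply Finset.sum_eq_zero
  intro α _
  split
  · rw [hmlast, arrO_some, mul_assoc, P.rel_mul _ _ hpairR, mul_zero]
  · rw [zero_mul]

end StringAlgebras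

end
end
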